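/- arXiv:2206.05891 — 2 statements merged into one kernel-verified Lean document; each statement's English description precedes it below -/
import Mathlib

section
/- Let ε₁,…,ε_a be independent random vectors in ℝ^d where each ε_i equals a fixed vector e_i with probability q ∈ [0,1] and equals 0 otherwise. Define avg(ε) to be the average of the nonzero elements among ε₁,…,ε_a (and 0 if all are zero). Then E[avg(ε)] = (1-(1-q)^a) · (1/a) ∑_{i=1}^a e_i. -/
open MeasureTheory Classical

lemma comb_aux (a : ℕ) (ha : 1 ≤ a) (q : ℝ) (i : Fin a) :
    ∑ s ∈ Finset.univ.filter (fun s : Finset (Fin a) => i ∈ s),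
      (q ^ s.card * (1 - q) ^ (a - s.card)) * (s.card : ℝ)⁻¹
    = (1 - (1 - q) ^ a) / a := by
  classical
  have key : ∑ s ∈ Finset.univ.filter (fun s : Finset (Fin a) => i ∈ s),
      (q ^ s.card * (1 - q) ^ (a - s.card)) * (s.card : ℝ)⁻¹
      = ∑ t ∈ ((Finset.univ : Finset (Fin a)).erase i).powerset,
      (q ^ (t.card + 1) * (1 - q) ^ (a - (t.card + 1))) * ((t.card + 1 : ℕ) : ℝ)⁻¹ := by
    refine Finset.sum_bij' (fun s _ => s.erase i) (fun t _ => insert i t) ?_ ?_ ?_ ?_ ?_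
    · intro s hs
      simp only [Finset.mem_powerset]
      exact Finset.erase_subset_erase i (Finset.subset_univ s)
    · intro t ht
      simp only [Finset.mem_filter, Finset.mem_univ, true_and]
      exact Finset.mem_insert_self i t
    · intro s hs
      simp only [Finset.mem_filter] at hs
      exact Finset.insert_erase hs.2
    · intro t ht
      simp only [Finset.mem_powerset] at ht
      refine Finset.erase_insert ?_
      intro hit
      exact (Finset.notMem_erase i _) (ht hit)
    · intro s hs
      simp only [Finset.mem_filter] at hs
      rw [Finset.card_erase_of_mem hs.2]
      have h1 : 1 ≤ s.card := Finset.card_pos.2 ⟨i, hs.2⟩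
      rw [Nat.sub_add_cancel h1]
  rw [key, Finset.sum_powerset]
  have hcard : ((Finset.univ : Finset (Fin a)).erase i).card = a - 1 := by
    rw [Finset.card_erase_of_mem (Finset.mem_univ i), Finset.card_univ, Fintype.card_fin]
  rw [hcard]
  have hsum : ∀ j ∈ Finset.range (a - 1 + 1),
      (∑ t ∈ Finset.powersetCard j ((Finset.univ : Finset (Fin a)).erase i),
        (q ^ (t.card + 1) * (1 - q) ^ (a - (t.card + 1))) * ((t.card + 1 : ℕ) : ℝ)⁻¹)
      = ((a - 1).choose j : ℝ) * ((q ^ (j + 1) * (1 - q) ^ (a - (j + 1))) * ((j + 1 : ℕ) : ℝ)⁻¹) := by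
    intro j hj
    have := Finset.sum_powersetCard j ((Finset.univ : Finset (Fin a)).erase i)
      (fun m => (q ^ (m + 1) * (1 - q) ^ (a - (m + 1))) * ((m + 1 : ℕ) : ℝ)⁻¹)
    rw [this, hcard, nsmul_eq_mul]
  rw [Finset.sum_congr rfl hsum]
  have hrange : a - 1 + 1 = a := Nat.sub_add_cancel ha
  rw [hrange]
  have ha' : (a : ℝ) ≠ 0 := Nat.cast_ne_zero.2 (by omega)
  have hch : ∀ j : ℕ, ((a - 1).choose j : ℝ) * ((j + 1 : ℕ) : ℝ)⁻¹ = (a.choose (j + 1) : ℝ) / a := by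
    intro j
    have h := Nat.add_one_mul_choose_eq (a - 1) j
    rw [hrange] at h
    have h' : (a : ℝ) * ((a - 1).choose j : ℝ) = (a.choose (j + 1) : ℝ) * ((j + 1 : ℕ) : ℝ) := by
      exact_mod_cast congrArg (Nat.cast : ℕ → ℝ) h
    have hj' : ((j + 1 : ℕ) : ℝ) ≠ 0 := Nat.cast_ne_zero.2 (by omega)
    rw [← div_eq_mul_inv, div_eq_div_iff hj' ha']
    linarith [h']
  have step : ∀ j ∈ Finset.range a,
      ((a - 1).choose j : ℝ) * ((q ^ (j + 1) * (1 - q) ^ (a - (j + 1))) * ((j + 1 : ℕ) : ℝ)⁻¹)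
      = (q ^ (j + 1) * (1 - q) ^ (a - (j + 1)) * (a.choose (j + 1) : ℝ)) / a := by
    intro j _
    calc ((a - 1).choose j : ℝ) * ((q ^ (j + 1) * (1 - q) ^ (a - (j + 1))) * ((j + 1 : ℕ) : ℝ)⁻¹)
        = (((a - 1).choose j : ℝ) * ((j + 1 : ℕ) : ℝ)⁻¹) * (q ^ (j + 1) * (1 - q) ^ (a - (j + 1))) := by ring
      _ = ((a.choose (j + 1) : ℝ) / a) * (q ^ (j + 1) * (1 - q) ^ (a - (j + 1))) := by rw [hch j]
      _ = (q ^ (j + 1) * (1 - q) ^ (a - (j + 1)) * (a.choose (j + 1) : ℝ)) / a := by ring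
  rw [Finset.sum_congr rfl step, ← Finset.sum_div]
  congr 1
  have hb : ∑ m ∈ Finset.range (a + 1), q ^ m * (1 - q) ^ (a - m) * (a.choose m : ℝ) = 1 := by
    have h := add_pow q (1 - q) a
    simp only [add_sub_cancel, one_pow] at h
    linarith [h]
  have h2 := Finset.sum_range_succ' (fun m => q ^ m * (1 - q) ^ (a - m) * (a.choose m : ℝ)) a
  rw [hb] at h2
  simp only [pow_zero, Nat.sub_zero, Nat.choose_zero_right, Nat.cast_one, one_mul, mul_one] at h2
  linarith [h2]

theorem stmt_2 {Ω : Type*} {m0 : MeasurableSpace Ω} (μ : Measure Ω)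
    [IsProbabilityMeasure μ]
    (d a : ℕ) (ha : 1 ≤ a) (q : ℝ) (hq : q ∈ Set.Icc (0:ℝ) 1)
    (e : Fin a → EuclideanSpace ℝ (Fin d)) (he : ∀ i, e i ≠ 0)
    (ε : Fin a → Ω → EuclideanSpace ℝ (Fin d))
    (hmeas : ∀ i, Measurable (ε i))
    (hindep : ProbabilityTheory.iIndepFun ε μ)
    (hq1 : ∀ i, μ {ω | ε i ω = e i} = ENNReal.ofReal q)
    (hq0 : ∀ i, μ {ω | ε i ω = 0} = ENNReal.ofReal (1 - q))
    (avg : Ω → EuclideanSpace ℝ (Fin d))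
    (havg : ∀ ω, avg ω =
      if ((Finset.univ : Finset (Fin a)).filter (fun i => ε i ω ≠ 0)).Nonempty
      then (((Finset.univ : Finset (Fin a)).filter (fun i => ε i ω ≠ 0)).card : ℝ)⁻¹ •
        ∑ i ∈ (Finset.univ : Finset (Fin a)).filter (fun i => ε i ω ≠ 0), ε i ω
      else 0) :
    ∫ ω, avg ω ∂μ = (1 - (1 - q) ^ a) • ((a : ℝ)⁻¹ • ∑ i, e i) := by
  classical
  obtain ⟨hq0', hq1'⟩ := hq
  set T : Ω → Finset (Fin a) := fun ω => Finset.univ.filter (fun i => ε i ω ≠ 0) with hTdef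
  set F : Finset (Fin a) → EuclideanSpace ℝ (Fin d) := fun s =>
    if s.Nonempty then (s.card : ℝ)⁻¹ • ∑ i ∈ s, e i else 0 with hFdef
  have hmeasA : ∀ i, MeasurableSet {ω | ε i ω = e i} :=
    fun i => (hmeas i) (measurableSet_singleton (e i))
  have hmeas0 : ∀ i, MeasurableSet {ω | ε i ω = 0} :=
    fun i => (hmeas i) (measurableSet_singleton 0)
  have hmeasne : ∀ i, MeasurableSet {ω | ε i ω ≠ 0} := fun i => (hmeas0 i).compl
  have hμne : ∀ i, μ {ω | ε i ω ≠ 0} = ENNReal.ofReal q := by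
    intro i
    have h : μ ({ω | ε i ω = 0}ᶜ) = 1 - ENNReal.ofReal (1 - q) := by
      rw [measure_compl (hmeas0 i) (measure_ne_top μ _), hq0 i, measure_univ]
    have hadd : ENNReal.ofReal (1 - q) + ENNReal.ofReal q = 1 := by
      rw [← ENNReal.ofReal_add (by linarith) (by linarith)]
      norm_num
    calc μ {ω | ε i ω ≠ 0} = 1 - ENNReal.ofReal (1 - q) := h
      _ = ENNReal.ofReal q := by
          rw [← hadd, ENNReal.add_sub_cancel_left ENNReal.ofReal_ne_top]
  have hae : ∀ᵐ ω ∂μ, ∀ i, ε i ω = e i ∨ ε i ω = 0 := by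
    rw [ae_all_iff]
    intro i
    have hdisj : Disjoint {ω | ε i ω = e i} {ω | ε i ω = 0} := by
      rw [Set.disjoint_left]
      intro ω h1 h2
      exact he i (by rw [← h1]; exact h2)
    have hu : μ ({ω | ε i ω = e i} ∪ {ω | ε i ω = 0}) = 1 := by
      rw [measure_union hdisj (hmeas0 i), hq1 i, hq0 i,
        ← ENNReal.ofReal_add (by linarith) (by linarith)]
      norm_num
    have hz := (prob_compl_eq_zero_iff ((hmeasA i).union (hmeas0 i))).2 hu
    rw [ae_iff]
    have hset : {ω | ¬(ε i ω = e i ∨ ε i ω = 0)} = ({ω | ε i ω = e i} ∪ {ω | ε i ω = 0})ᶜ := by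
      ext ω
      simp [Set.mem_union]
    rw [hset]
    exact hz
  -- atoms
  have hatom : ∀ s : Finset (Fin a), T ⁻¹' {s} =
      ⋂ i, (if i ∈ s then {ω | ε i ω ≠ 0} else {ω | ε i ω = 0}) := by
    intro s
    ext ω
    have hmem : ∀ i, i ∈ T ω ↔ ε i ω ≠ 0 := by
      intro i; simp [hTdef]
    simp only [Set.mem_preimage, Set.mem_singleton_iff, Set.mem_iInter, Finset.ext_iff]
    constructor
    · intro h i
      rcases Classical.em (i ∈ s) with hi | hi
      · simp only [hi, if_true, Set.mem_setOf_eq]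
        exact (hmem i).1 ((h i).2 hi)
      · simp only [hi, if_false, Set.mem_setOf_eq]
        by_contra hne
        exact hi ((h i).1 ((hmem i).2 hne))
    · intro h i
      have hi := h i
      constructor
      · intro hit
        by_contra his
        simp only [his, if_false, Set.mem_setOf_eq] at hi
        exact (hmem i).1 hit hi
      · intro his
        simp only [his, if_true, Set.mem_setOf_eq] at hi
        exact (hmem i).2 hi
  have hatommeas : ∀ s : Finset (Fin a), MeasurableSet (T ⁻¹' {s}) := by
    intro s
    rw [hatom s]
    refine MeasurableSet.iInter (fun i => ?_)
    split
    · exact hmeasne i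
    · exact hmeas0 i
  have hμatom : ∀ s : Finset (Fin a),
      (μ (T ⁻¹' {s})).toReal = q ^ s.card * (1 - q) ^ (a - s.card) := by
    intro s
    rw [hatom s]
    have hcm : ∀ i : Fin a, MeasurableSet[(inferInstance :
        MeasurableSpace (EuclideanSpace ℝ (Fin d))).comap (ε i)]
        (if i ∈ s then {ω | ε i ω ≠ 0} else {ω | ε i ω = 0}) := by
      intro i
      rcases Classical.em (i ∈ s) with hi | hi
      · simp only [hi, if_true]
        exact ⟨{0}ᶜ, (measurableSet_singleton 0).compl, rfl⟩
      · simp only [hi, if_false]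
        exact ⟨{0}, measurableSet_singleton 0, rfl⟩
    rw [hindep.meas_iInter hcm]
    have hval : ∀ i, μ (if i ∈ s then {ω | ε i ω ≠ 0} else {ω | ε i ω = 0})
        = if i ∈ s then ENNReal.ofReal q else ENNReal.ofReal (1 - q) := by
      intro i
      split
      · exact hμne i
      · exact hq0 i
    rw [Finset.prod_congr rfl (fun i _ => hval i)]
    have hprod : (∏ i, (if i ∈ s then ENNReal.ofReal q else ENNReal.ofReal (1 - q)))
        = ENNReal.ofReal q ^ s.card * ENNReal.ofReal (1 - q) ^ (a - s.card) := by
      rw [← Finset.prod_filter_mul_prod_filter_not Finset.univ (fun i => i ∈ s)]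
      have h1 : Finset.univ.filter (fun i => i ∈ s) = s := by ext x; simp
      have h2 : Finset.univ.filter (fun i => ¬ i ∈ s) = sᶜ := by ext x; simp
      rw [h1, h2]
      have e1 : (∏ i ∈ s, (if i ∈ s then ENNReal.ofReal q else ENNReal.ofReal (1 - q)))
          = ENNReal.ofReal q ^ s.card := by
        rw [Finset.prod_congr rfl (fun i hi => if_pos hi), Finset.prod_const]
      have e2 : (∏ i ∈ sᶜ, (if i ∈ s then ENNReal.ofReal q else ENNReal.ofReal (1 - q)))
          = ENNReal.ofReal (1 - q) ^ (a - s.card) := by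
        rw [Finset.prod_congr rfl (fun i hi => if_neg (Finset.mem_compl.1 hi)),
          Finset.prod_const, Finset.card_compl, Fintype.card_fin]
      rw [e1, e2]
    rw [hprod, ENNReal.toReal_mul, ← ENNReal.ofReal_pow hq0',
      ← ENNReal.ofReal_pow (by linarith : (0:ℝ) ≤ 1 - q),
      ENNReal.toReal_ofReal (pow_nonneg hq0' _),
      ENNReal.toReal_ofReal (pow_nonneg (by linarith : (0:ℝ) ≤ 1 - q) _)]
  -- representation of avg
  have hrepr : ∀ ω, (∑ s : Finset (Fin a), (T ⁻¹' {s}).indicator (fun _ => F s) ω) = F (T ω) := by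
    intro ω
    rw [Finset.sum_eq_single (T ω)]
    · exact Set.indicator_of_mem rfl _
    · intro s _ hs
      refine Set.indicator_of_notMem (fun hωs => ?_) _
      exact hs (Set.mem_singleton_iff.mp (Set.mem_preimage.mp hωs)).symm
    · intro h
      exact absurd (Finset.mem_univ _) h
  have haeeq : avg =ᵐ[μ] fun ω => ∑ s : Finset (Fin a), (T ⁻¹' {s}).indicator (fun _ => F s) ω := by
    filter_upwards [hae] with ω hω
    rw [havg ω, hrepr ω, hFdef]
    by_cases hne : (T ω).Nonempty
    · rw [if_pos hne]
      simp only
      rw [if_pos hne]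
      congr 1
      refine Finset.sum_congr rfl (fun i hi => ?_)
      have hiz : ε i ω ≠ 0 := by
        simpa [hTdef] using hi
      rcases hω i with h | h
      · exact h
      · exact absurd h hiz
    · rw [if_neg hne]
      simp only
      rw [if_neg hne]
  rw [integral_congr_ae haeeq,
    integral_finset_sum _ (fun s _ => (integrable_const (F s)).indicator (hatommeas s))]
  have hint : ∀ s : Finset (Fin a), ∫ ω, (T ⁻¹' {s}).indicator (fun _ => F s) ω ∂μ
      = (μ (T ⁻¹' {s})).toReal • F s := fun s => integral_indicator_const (F s) (hatommeas s)
  rw [Finset.sum_congr rfl (fun s _ => hint s)]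
  have hterm : ∀ s : Finset (Fin a), (μ (T ⁻¹' {s})).toReal • F s
      = ∑ i, (if i ∈ s then (q ^ s.card * (1 - q) ^ (a - s.card)) * (s.card : ℝ)⁻¹ else 0) • e i := by
    intro s
    rw [hμatom s, hFdef]
    by_cases hne : s.Nonempty
    · simp only [if_pos hne, smul_smul, Finset.smul_sum, ite_smul, zero_smul,
        Finset.sum_ite_mem, Finset.univ_inter]
    · rw [Finset.not_nonempty_iff_eq_empty] at hne
      subst hne
      simp
  rw [Finset.sum_congr rfl (fun s _ => hterm s), Finset.sum_comm]
  have hcol : ∀ i : Fin a,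
      (∑ s : Finset (Fin a), (if i ∈ s then (q ^ s.card * (1 - q) ^ (a - s.card)) * (s.card : ℝ)⁻¹ else 0) • e i)
      = ((1 - (1 - q) ^ a) / a) • e i := by
    intro i
    rw [← Finset.sum_smul, ← Finset.sum_filter, comb_aux a ha q i]
  rw [Finset.sum_congr rfl (fun i _ => hcol i), ← Finset.smul_sum, smul_smul, div_eq_mul_inv]
end

section
/- Under the same setting, the expected squared Euclidean norm satisfies E[‖avg(ε)‖²] ≤ (1-(1-q)^a) · (1/a) ∑_{i=1}^a ‖e_i‖². -/
open MeasureTheory Classical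

private lemma stmt3_sum_pow_card (a : ℕ) (q : ℝ) :
    ∑ T : Finset (Fin a), q ^ T.card * (1 - q) ^ (a - T.card) = 1 := by
  have h := Finset.prod_add (fun _ : Fin a => q) (fun _ => 1 - q) Finset.univ
  simp only [add_sub_cancel, Finset.prod_const, one_pow, Finset.powerset_univ] at h
  conv_rhs => rw [h]
  exact Finset.sum_congr rfl fun T _ => by
    rw [← Finset.compl_eq_univ_sdiff, Finset.card_compl, Fintype.card_fin]

private lemma stmt3_swap_w {a : ℕ} (q : ℝ) (i j : Fin a) :
    ∑ T : Finset (Fin a), (if i ∈ T then q ^ T.card * (1 - q) ^ (a - T.card) * (T.card : ℝ)⁻¹ else 0)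
    = ∑ T : Finset (Fin a), (if j ∈ T then q ^ T.card * (1 - q) ^ (a - T.card) * (T.card : ℝ)⁻¹ else 0) := by
  apply Fintype.sum_equiv (Equiv.finsetCongr (Equiv.swap i j))
  intro T
  have hmem : j ∈ (Equiv.finsetCongr (Equiv.swap i j)) T ↔ i ∈ T := by
    simp [Equiv.finsetCongr_apply, Finset.mem_map_equiv, Equiv.symm_apply_eq]
  have hcard : ((Equiv.finsetCongr (Equiv.swap i j)) T).card = T.card := by
    simp [Equiv.finsetCongr_apply, Finset.card_map]
  simp only [hmem, hcard]

private lemma stmt3_w_const {a : ℕ} (ha : 1 ≤ a) (q : ℝ) (i : Fin a) :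
    ∑ T : Finset (Fin a), (if i ∈ T then q ^ T.card * (1 - q) ^ (a - T.card) * (T.card : ℝ)⁻¹ else 0)
    = (1 - (1 - q) ^ a) * (a : ℝ)⁻¹ := by
  set w : Fin a → ℝ := fun j => ∑ T : Finset (Fin a),
    (if j ∈ T then q ^ T.card * (1 - q) ^ (a - T.card) * (T.card : ℝ)⁻¹ else 0) with hw
  have hsum : ∑ j, w j = 1 - (1 - q) ^ a := by
    rw [Finset.sum_comm]
    have : ∀ T : Finset (Fin a),
        (∑ j, if j ∈ T then q ^ T.card * (1 - q) ^ (a - T.card) * (T.card : ℝ)⁻¹ else 0)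
        = q ^ T.card * (1 - q) ^ (a - T.card)
          - (if T = (∅ : Finset (Fin a)) then q ^ T.card * (1 - q) ^ (a - T.card) else 0) := by
      intro T
      rcases eq_or_ne T ∅ with rfl | hT
      · simp
      · have hc : (T.card : ℝ) ≠ 0 := by
          simpa using Finset.card_ne_zero.mpr (Finset.nonempty_iff_ne_empty.mpr hT)
        rw [Finset.sum_ite_mem]
        simp only [Finset.univ_inter, Finset.sum_const, nsmul_eq_mul, if_neg hT, sub_zero]
        field_simp
    rw [Finset.sum_congr rfl fun T _ => this T, Finset.sum_sub_distrib, stmt3_sum_pow_card,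
      Finset.sum_ite_eq' Finset.univ (∅ : Finset (Fin a))]
    simp
  have hconst : ∀ j, w j = w i := fun j => stmt3_swap_w q j i
  have hkey : (a : ℝ) * w i = 1 - (1 - q) ^ a := by
    rw [← hsum, Finset.sum_congr rfl fun j _ => hconst j]
    simp [mul_comm]
  have ha' : (a : ℝ) ≠ 0 := by positivity
  rw [← hkey, mul_comm (a:ℝ) (w i), mul_assoc, mul_inv_cancel₀ ha', mul_one]

private lemma stmt3_keyA {a : ℕ} (ha : 1 ≤ a) (q : ℝ) (r : Fin a → ℝ) :
    ∑ T : Finset (Fin a), q ^ T.card * (1 - q) ^ (a - T.card) *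
      (if T.Nonempty then (T.card : ℝ)⁻¹ * ∑ i ∈ T, r i else 0)
    = (1 - (1 - q) ^ a) * ((a : ℝ)⁻¹ * ∑ i, r i) := by
  have step1 : ∀ T : Finset (Fin a), q ^ T.card * (1 - q) ^ (a - T.card) *
      (if T.Nonempty then (T.card : ℝ)⁻¹ * ∑ i ∈ T, r i else 0)
      = ∑ i, (if i ∈ T then q ^ T.card * (1 - q) ^ (a - T.card) * (T.card : ℝ)⁻¹ else 0) * r i := by
    intro T
    rcases T.eq_empty_or_nonempty with rfl | hT
    · simp
    · rw [if_pos hT]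
      simp only [ite_mul, zero_mul]
      rw [Finset.sum_ite_mem, Finset.univ_inter, ← Finset.mul_sum]
      ring
  rw [Finset.sum_congr rfl fun T _ => step1 T, Finset.sum_comm]
  have hterm : ∀ i : Fin a, (∑ T : Finset (Fin a),
      (if i ∈ T then q ^ T.card * (1 - q) ^ (a - T.card) * (T.card : ℝ)⁻¹ else 0) * r i)
      = ((1 - (1 - q) ^ a) * (a : ℝ)⁻¹) * r i := by
    intro i
    rw [← Finset.sum_mul, stmt3_w_const ha q i]
  rw [Finset.sum_congr rfl fun i _ => hterm i, ← Finset.mul_sum, mul_assoc]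

theorem stmt_3 {Ω : Type*} {m0 : MeasurableSpace Ω} (μ : Measure Ω)
    [IsProbabilityMeasure μ]
    (d a : ℕ) (ha : 1 ≤ a) (q : ℝ) (hq : q ∈ Set.Icc (0:ℝ) 1)
    (e : Fin a → EuclideanSpace ℝ (Fin d)) (he : ∀ i, e i ≠ 0)
    (ε : Fin a → Ω → EuclideanSpace ℝ (Fin d))
    (hmeas : ∀ i, Measurable (ε i))
    (hindep : ProbabilityTheory.iIndepFun ε μ)
    (hq1 : ∀ i, μ {ω | ε i ω = e i} = ENNReal.ofReal q)
    (hq0 : ∀ i, μ {ω | ε i ω = 0} = ENNReal.ofReal (1 - q))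
    (avg : Ω → EuclideanSpace ℝ (Fin d))
    (havg : ∀ ω, avg ω =
      if ((Finset.univ : Finset (Fin a)).filter (fun i => ε i ω ≠ 0)).Nonempty
      then (((Finset.univ : Finset (Fin a)).filter (fun i => ε i ω ≠ 0)).card : ℝ)⁻¹ •
        ∑ i ∈ (Finset.univ : Finset (Fin a)).filter (fun i => ε i ω ≠ 0), ε i ω
      else 0) :
    ∫ ω, ‖avg ω‖ ^ 2 ∂μ ≤ (1 - (1 - q) ^ a) * ((a : ℝ)⁻¹ * ∑ i, ‖e i‖ ^ 2) := by
  classical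
  have hq0' : (0:ℝ) ≤ q := hq.1
  have hq1' : q ≤ 1 := hq.2
  have hm0 : ∀ i, MeasurableSet {ω | ε i ω = 0} := fun i =>
    (hmeas i) (measurableSet_singleton 0)
  have hme : ∀ i, MeasurableSet {ω | ε i ω = e i} := fun i =>
    (hmeas i) (measurableSet_singleton (e i))
  have hadd : ENNReal.ofReal q + ENNReal.ofReal (1 - q) = 1 := by
    rw [← ENNReal.ofReal_add hq0' (by linarith)]
    norm_num
  have hμne : ∀ i, μ {ω | ε i ω ≠ 0} = ENNReal.ofReal q := by
    intro i
    have h : {ω | ε i ω ≠ 0} = {ω | ε i ω = 0}ᶜ := rfl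
    rw [h, measure_compl (hm0 i) (measure_ne_top μ _), hq0 i, measure_univ]
    exact (ENNReal.eq_sub_of_add_eq ENNReal.ofReal_ne_top hadd).symm
  have hae : ∀ᵐ ω ∂μ, ∀ i, ε i ω = 0 ∨ ε i ω = e i := by
    rw [MeasureTheory.ae_all_iff]
    intro i
    have hdisj : Disjoint {ω | ε i ω = 0} {ω | ε i ω = e i} := by
      rw [Set.disjoint_left]
      intro ω h1 h2
      exact he i (by rw [← h2, h1])
    have hU : μ ({ω | ε i ω = 0} ∪ {ω | ε i ω = e i}) = 1 := by
      rw [measure_union hdisj (hme i), hq0 i, hq1 i, add_comm, hadd]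
    have hcompl : {ω | ¬ (ε i ω = 0 ∨ ε i ω = e i)} =
        ({ω | ε i ω = 0} ∪ {ω | ε i ω = e i})ᶜ := by
      ext ω; simp [not_or]
    rw [ae_iff]
    simp only [hcompl]
    rw [measure_compl ((hm0 i).union (hme i)) (measure_ne_top μ _), hU, measure_univ,
      tsub_self]
  -- pattern sets
  set S : Ω → Finset (Fin a) := fun ω => Finset.univ.filter (fun i => ε i ω ≠ 0) with hS
  set A : Finset (Fin a) → Set Ω := fun T => {ω | S ω = T} with hA
  set B : Finset (Fin a) → ∀ _ : Fin a, Set (EuclideanSpace ℝ (Fin d)) :=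
    fun T i => if i ∈ T then ({0}ᶜ : Set (EuclideanSpace ℝ (Fin d))) else {0} with hB
  have hApre : ∀ T, A T = ⋂ i ∈ Finset.univ, ε i ⁻¹' (B T i) := by
    intro T
    ext ω
    simp only [hA, Set.mem_setOf_eq, hS, Finset.ext_iff, Finset.mem_filter, Finset.mem_univ,
      true_and, Set.mem_iInter, Set.mem_preimage, hB]
    constructor
    · intro h i _
      by_cases hi : i ∈ T
      · simp only [if_pos hi, Set.mem_compl_iff, Set.mem_singleton_iff]
        exact (h i).mpr hi
      · simp only [if_neg hi, Set.mem_singleton_iff]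
        by_contra hne
        exact hi ((h i).mp hne)
    · intro h i
      have := h i trivial
      by_cases hi : i ∈ T
      · simp only [if_pos hi, Set.mem_compl_iff, Set.mem_singleton_iff] at this
        exact ⟨fun _ => hi, fun _ => this⟩
      · simp only [if_neg hi, Set.mem_singleton_iff] at this
        exact ⟨fun hne => absurd this hne, fun h' => absurd h' hi⟩
  have hB_meas : ∀ T, ∀ i ∈ Finset.univ, MeasurableSet (B T i) := by
    intro T i _
    by_cases hi : i ∈ T <;> simp only [hB, hi, ite_true, ite_false]
    · exact (measurableSet_singleton 0).compl
    · exact measurableSet_singleton 0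
  have hAmeas : ∀ T, MeasurableSet (A T) := by
    intro T
    rw [hApre]
    exact Finset.measurableSet_biInter _ fun i hi => (hmeas i) (hB_meas T i hi)
  have hμA : ∀ T : Finset (Fin a), μ (A T) =
      ENNReal.ofReal q ^ T.card * ENNReal.ofReal (1 - q) ^ (a - T.card) := by
    intro T
    rw [hApre, hindep.measure_inter_preimage_eq_mul Finset.univ (hB_meas T)]
    have hval : ∀ i : Fin a, μ (ε i ⁻¹' B T i) =
        if i ∈ T then ENNReal.ofReal q else ENNReal.ofReal (1 - q) := by
      intro i
      by_cases hi : i ∈ T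
      · rw [if_pos hi]
        have hpre : ε i ⁻¹' B T i = {ω | ε i ω ≠ 0} := by
          ext ω; simp [hB, hi]
        rw [hpre, hμne i]
      · rw [if_neg hi]
        have hpre : ε i ⁻¹' B T i = {ω | ε i ω = 0} := by
          ext ω; simp [hB, hi]
        rw [hpre, hq0 i]
    rw [Finset.prod_congr rfl fun i _ => hval i, Finset.prod_ite, Finset.prod_const,
      Finset.prod_const]
    congr 2
    · rw [show Finset.univ.filter (fun i => i ∈ T) = T by ext i; simp]
    · rw [show Finset.univ.filter (fun i => ¬ i ∈ T) = Tᶜ by ext i; simp,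
        Finset.card_compl, Fintype.card_fin]
  have hμA_toReal : ∀ T : Finset (Fin a), (μ (A T)).toReal =
      q ^ T.card * (1 - q) ^ (a - T.card) := by
    intro T
    rw [hμA T, ENNReal.toReal_mul, ENNReal.toReal_pow, ENNReal.toReal_pow,
      ENNReal.toReal_ofReal hq0', ENNReal.toReal_ofReal (by linarith)]
  -- the dominating simple function
  set c : Finset (Fin a) → ℝ :=
    fun T => if T.Nonempty then (T.card : ℝ)⁻¹ * ∑ i ∈ T, ‖e i‖ ^ 2 else 0 with hc
  set g : Ω → ℝ := fun ω => ∑ T : Finset (Fin a), (A T).indicator (fun _ => c T) ω with hg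
  have hg_int : Integrable g μ :=
    integrable_finset_sum _ fun T _ => (integrable_const (c T)).indicator (hAmeas T)
  have hg_val : ∀ ω, g ω = c (S ω) := by
    intro ω
    show (∑ T : Finset (Fin a), (A T).indicator (fun _ => c T) ω) = c (S ω)
    rw [Finset.sum_eq_single (S ω)]
    · have : ω ∈ A (S ω) := rfl
      rw [Set.indicator_of_mem this]
    · intro T _ hT
      apply Set.indicator_of_notMem
      intro hmem
      have hST : S ω = T := hmem
      exact hT hST.symm
    · intro h
      exact absurd (Finset.mem_univ _) h
  -- pointwise bound
  have hbound : ∀ ω, (∀ i, ε i ω = 0 ∨ ε i ω = e i) → ‖avg ω‖ ^ 2 ≤ g ω := by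
    intro ω hω
    rw [hg_val ω, havg ω]
    rcases (S ω).eq_empty_or_nonempty with hemp | hne
    · rw [hS] at hemp ⊢
      rw [hemp]
      simp [hc, hemp]
    · rw [if_pos (by exact hne), hc]
      simp only [if_pos hne]
      have hεe : ∀ i ∈ S ω, ε i ω = e i := by
        intro i hi
        have hne0 : ε i ω ≠ 0 := (Finset.mem_filter.mp hi).2
        rcases hω i with h | h
        · exact absurd h hne0
        · exact h
      rw [show (∑ i ∈ Finset.univ.filter (fun i => ε i ω ≠ 0), ε i ω) = ∑ i ∈ S ω, e i from
        Finset.sum_congr rfl hεe]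
      have hk : (0:ℝ) < (S ω).card := by
        exact_mod_cast Finset.card_pos.mpr hne
      have h1 : ‖((S ω).card : ℝ)⁻¹ • ∑ i ∈ S ω, e i‖ ^ 2
          = (((S ω).card : ℝ)⁻¹) ^ 2 * ‖∑ i ∈ S ω, e i‖ ^ 2 := by
        rw [norm_smul, mul_pow, Real.norm_eq_abs, abs_of_nonneg (by positivity)]
      have h2 : ‖∑ i ∈ S ω, e i‖ ^ 2 ≤ ((S ω).card : ℝ) * ∑ i ∈ S ω, ‖e i‖ ^ 2 := by
        calc ‖∑ i ∈ S ω, e i‖ ^ 2 ≤ (∑ i ∈ S ω, ‖e i‖) ^ 2 := by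
              have := norm_sum_le (S ω) e
              exact pow_le_pow_left₀ (norm_nonneg _) this 2
          _ ≤ ((S ω).card : ℝ) * ∑ i ∈ S ω, ‖e i‖ ^ 2 := sq_sum_le_card_mul_sum_sq
      rw [h1]
      calc (((S ω).card : ℝ)⁻¹) ^ 2 * ‖∑ i ∈ S ω, e i‖ ^ 2
          ≤ (((S ω).card : ℝ)⁻¹) ^ 2 * (((S ω).card : ℝ) * ∑ i ∈ S ω, ‖e i‖ ^ 2) := by
            apply mul_le_mul_of_nonneg_left h2 (by positivity)
        _ = (((S ω).card : ℝ))⁻¹ * ∑ i ∈ S ω, ‖e i‖ ^ 2 := by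
            field_simp
  -- integrate
  have hint : ∫ ω, ‖avg ω‖ ^ 2 ∂μ ≤ ∫ ω, g ω ∂μ := by
    apply integral_mono_of_nonneg
    · exact Filter.Eventually.of_forall fun ω => by positivity
    · exact hg_int
    · filter_upwards [hae] with ω hω
      exact hbound ω hω
  have hgval : ∫ ω, g ω ∂μ
      = ∑ T : Finset (Fin a), q ^ T.card * (1 - q) ^ (a - T.card) * c T := by
    rw [hg, integral_finset_sum _ fun T _ => (integrable_const (c T)).indicator (hAmeas T)]
    apply Finset.sum_congr rfl
    intro T _
    rw [integral_indicator_const (c T) (hAmeas T), smul_eq_mul, measureReal_def, hμA_toReal T, mul_comm]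
  calc ∫ ω, ‖avg ω‖ ^ 2 ∂μ ≤ ∫ ω, g ω ∂μ := hint
    _ = ∑ T : Finset (Fin a), q ^ T.card * (1 - q) ^ (a - T.card) * c T := hgval
    _ = (1 - (1 - q) ^ a) * ((a : ℝ)⁻¹ * ∑ i, ‖e i‖ ^ 2) := stmt3_keyA ha q _
end
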